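/- Let T > 0. There exists λ₀ ≥ 1, depending only on T, with the following property: for all λ ≥ λ₀, all h > 0, all B ≥ 0, and every continuous function L : [0, λh] → ℝ satisfying (i) 0 ≤ L(r) ≤ B h² for all r ∈ [0, λh], and (ii) L(r) ≥ L(0) − B λ^{-1} h r + T h^{-2} ∫₀^r ∫₀^s L(t) dt ds for all r ∈ [0, λh], one has L(0) ≤ (2/√T + 1) B λ^{-1} h². -/

import Mathlib

/-!
The integral inequality says that `L` is a supersolution of the Volterra equation
`Z r = L 0 - a r + ω² ∫₀^r ∫₀^s Z` with `a = Bλ⁻¹h` and `ω = √T / h`. The Volterra operator is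
positive, so starting from `0 ≤ L` every Picard iterate of this equation stays below `L`; the
iterates are the Taylor partial sums of its solution `L 0 cosh (ω r) - (a / ω) sinh (ω r)`.
At `r = λh` this gives `L 0 cosh (√T λ) - Bλ⁻¹h² sinh (√T λ) / √T ≤ Bh²`, and since
`cosh (√T λ) ≥ Tλ² / 2 ≥ λ` once `Tλ ≥ 2`, it follows that `L 0 ≤ (1 / √T + 1) Bλ⁻¹h²`.
-/

open MeasureTheory Finset Filter Topology Real
open scoped Nat

noncomputable section

def coshTaylor (n : ℕ) (x : ℝ) : ℝ := ∑ j ∈ range n, x ^ (2 * j) / (2 * j)!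

def sinhTaylor (n : ℕ) (x : ℝ) : ℝ := ∑ j ∈ range n, x ^ (2 * j + 1) / (2 * j + 1)!

@[fun_prop]
theorem continuous_coshTaylor (n : ℕ) : Continuous (coshTaylor n) := by
  unfold coshTaylor; fun_prop

@[fun_prop]
theorem continuous_sinhTaylor (n : ℕ) : Continuous (sinhTaylor n) := by
  unfold sinhTaylor; fun_prop

theorem tendsto_coshTaylor (x : ℝ) : Tendsto (coshTaylor · x) atTop (𝓝 (cosh x)) :=
  (hasSum_cosh x).tendsto_sum_nat

theorem tendsto_sinhTaylor (x : ℝ) : Tendsto (sinhTaylor · x) atTop (𝓝 (sinh x)) :=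
  (hasSum_sinh x).tendsto_sum_nat

theorem mul_integral_pow_div_factorial (c s : ℝ) (m : ℕ) :
    c * ∫ t in (0 : ℝ)..s, (c * t) ^ m / m ! = (c * s) ^ (m + 1) / (m + 1)! := by
  simp only [mul_pow, mul_div_assoc]
  rw [intervalIntegral.integral_const_mul, intervalIntegral.integral_div, integral_pow,
    Nat.factorial_succ]
  push_cast
  field_simp
  ring

theorem mul_integral_coshTaylor (c s : ℝ) (n : ℕ) :
    c * ∫ t in (0 : ℝ)..s, coshTaylor n (c * t) = sinhTaylor n (c * s) := by
  unfold coshTaylor sinhTaylor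
  rw [intervalIntegral.integral_finsetSum
      fun j _ => (by fun_prop : Continuous _).intervalIntegrable _ _, mul_sum]
  exact sum_congr rfl fun j _ => mul_integral_pow_div_factorial c s (2 * j)

theorem mul_integral_sinhTaylor (c s : ℝ) (n : ℕ) :
    c * ∫ t in (0 : ℝ)..s, sinhTaylor n (c * t) = coshTaylor (n + 1) (c * s) - 1 := by
  unfold coshTaylor sinhTaylor
  rw [intervalIntegral.integral_finsetSum
      fun j _ => (by fun_prop : Continuous _).intervalIntegrable _ _, mul_sum, sum_range_succ']
  simp only [mul_zero, pow_zero, Nat.factorial_zero, Nat.cast_one, div_one, add_sub_cancel_right]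
  exact sum_congr rfl fun j _ => mul_integral_pow_div_factorial c s (2 * j + 1)

theorem sq_div_two_le_cosh (x : ℝ) : x ^ 2 / 2 ≤ cosh x := by
  simpa using le_hasSum (hasSum_cosh x) 1 fun j _ => by rw [pow_mul]; positivity

theorem sinh_le_cosh (x : ℝ) : sinh x ≤ cosh x := by
  linarith [cosh_sub_sinh x, exp_pos (-x)]

def picardIterate (L₀ a ω : ℝ) (n : ℕ) (r : ℝ) : ℝ :=
  L₀ * coshTaylor n (ω * r) - a / ω * sinhTaylor n (ω * r)

@[fun_prop]
theorem continuous_picardIterate (L₀ a ω : ℝ) (n : ℕ) : Continuous (picardIterate L₀ a ω n) := by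
  unfold picardIterate; fun_prop

theorem picardIterate_succ (L₀ a : ℝ) {ω : ℝ} (hω : ω ≠ 0) (n : ℕ) (r : ℝ) :
    L₀ - a * r + ω ^ 2 * ∫ s in (0 : ℝ)..r, ∫ t in (0 : ℝ)..s, picardIterate L₀ a ω n t =
      picardIterate L₀ a ω (n + 1) r := by
  have inner (s : ℝ) : ω * ∫ t in (0 : ℝ)..s, picardIterate L₀ a ω n t =
      L₀ * sinhTaylor n (ω * s) - a / ω * coshTaylor (n + 1) (ω * s) + a / ω := by
    unfold picardIterate
    rw [intervalIntegral.integral_sub ((by fun_prop : Continuous _).intervalIntegrable _ _)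
        ((by fun_prop : Continuous _).intervalIntegrable _ _),
      intervalIntegral.integral_const_mul, intervalIntegral.integral_const_mul]
    linear_combination L₀ * mul_integral_coshTaylor ω s n - a / ω * mul_integral_sinhTaylor ω s n
  have outer : ω * ∫ s in (0 : ℝ)..r,
      (L₀ * sinhTaylor n (ω * s) - a / ω * coshTaylor (n + 1) (ω * s) + a / ω) =
      L₀ * (coshTaylor (n + 1) (ω * r) - 1) - a / ω * sinhTaylor (n + 1) (ω * r) + a * r := by
    rw [intervalIntegral.integral_add ((by fun_prop : Continuous _).intervalIntegrable _ _)
        intervalIntegrable_const,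
      intervalIntegral.integral_sub ((by fun_prop : Continuous _).intervalIntegrable _ _)
        ((by fun_prop : Continuous _).intervalIntegrable _ _),
      intervalIntegral.integral_const_mul, intervalIntegral.integral_const_mul,
      intervalIntegral.integral_const, smul_eq_mul]
    field_simp
    linear_combination ω * L₀ * mul_integral_sinhTaylor ω r n
      - a * mul_integral_coshTaylor ω r (n + 1)
  rw [pow_two, mul_assoc, ← intervalIntegral.integral_const_mul]
  simp only [inner]
  rw [outer]
  unfold picardIterate
  ring

theorem integral_integral_mono_on {f g : ℝ → ℝ} {R r : ℝ} (hf : ContinuousOn f (Set.Icc 0 R))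
    (hg : ContinuousOn g (Set.Icc 0 R)) (hfg : ∀ t ∈ Set.Icc 0 R, f t ≤ g t)
    (hr : r ∈ Set.Icc 0 R) :
    ∫ s in (0 : ℝ)..r, ∫ t in (0 : ℝ)..s, f t ≤ ∫ s in (0 : ℝ)..r, ∫ t in (0 : ℝ)..s, g t := by
  have hsub {s : ℝ} (hs : s ∈ Set.Icc 0 r) : Set.uIcc 0 s ⊆ Set.Icc 0 R := by
    rw [Set.uIcc_of_le hs.1]; exact Set.Icc_subset_Icc le_rfl (hs.2.trans hr.2)
  have integrableOn {u : ℝ → ℝ} (hu : ContinuousOn u (Set.Icc 0 R)) {s : ℝ}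
      (hs : s ∈ Set.Icc 0 r) : IntegrableOn u (Set.uIcc 0 s) :=
    (hu.mono (hsub hs)).integrableOn_compact isCompact_uIcc
  have primitive_integrable {u : ℝ → ℝ} (hu : ContinuousOn u (Set.Icc 0 R)) :
      IntervalIntegrable (fun s => ∫ t in (0 : ℝ)..s, u t) volume 0 r :=
    (intervalIntegral.continuousOn_primitive_interval
      (integrableOn hu ⟨hr.1, le_rfl⟩)).intervalIntegrable
  refine intervalIntegral.integral_mono_on hr.1 (primitive_integrable hf) (primitive_integrable hg)
    fun s hs => intervalIntegral.integral_mono_on hs.1 (integrableOn hf hs).intervalIntegrable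
      (integrableOn hg hs).intervalIntegrable fun t ht => hfg t ⟨ht.1, ht.2.trans (hs.2.trans hr.2)⟩

section IntegralInequality

variable {L : ℝ → ℝ} {R a ω : ℝ}

theorem picardIterate_le (hω : ω ≠ 0) (hL : ContinuousOn L (Set.Icc 0 R))
    (hL_nonneg : ∀ r ∈ Set.Icc 0 R, 0 ≤ L r)
    (hineq : ∀ r ∈ Set.Icc 0 R,
      L 0 - a * r + ω ^ 2 * ∫ s in (0 : ℝ)..r, ∫ t in (0 : ℝ)..s, L t ≤ L r) (n : ℕ) :
    ∀ r ∈ Set.Icc 0 R, picardIterate (L 0) a ω n r ≤ L r := by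
  induction n with
  | zero => simpa [picardIterate, coshTaylor, sinhTaylor] using hL_nonneg
  | succ n ih =>
    intro r hr
    rw [← picardIterate_succ _ _ hω]
    refine le_trans ?_ (hineq r hr)
    gcongr
    exact integral_integral_mono_on (continuous_picardIterate _ _ _ n).continuousOn hL ih hr

theorem cosh_sub_sinh_le_of_integral_inequality (hω : ω ≠ 0) (hL : ContinuousOn L (Set.Icc 0 R))
    (hL_nonneg : ∀ r ∈ Set.Icc 0 R, 0 ≤ L r)
    (hineq : ∀ r ∈ Set.Icc 0 R,
      L 0 - a * r + ω ^ 2 * ∫ s in (0 : ℝ)..r, ∫ t in (0 : ℝ)..s, L t ≤ L r)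
    {r : ℝ} (hr : r ∈ Set.Icc 0 R) :
    L 0 * cosh (ω * r) - a / ω * sinh (ω * r) ≤ L r :=
  le_of_tendsto' (((tendsto_coshTaylor _).const_mul _).sub ((tendsto_sinhTaylor _).const_mul _))
    fun n => picardIterate_le hω hL hL_nonneg hineq n r hr

end IntegralInequality

theorem le_cosh_sqrt_mul {T lam : ℝ} (hT : 0 ≤ T) (hlam : 0 ≤ lam) (hTlam : 2 ≤ lam * T) :
    lam ≤ cosh (√T * lam) := by
  have hx_sq : (√T * lam) ^ 2 = T * lam ^ 2 := by rw [mul_pow, sq_sqrt hT]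
  nlinarith [sq_div_two_le_cosh (√T * lam), mul_le_mul_of_nonneg_left hTlam hlam]

theorem le_div_add_of_cosh_sub_sinh_le {L₀ β s x lam : ℝ} (hs : 0 ≤ s) (hβ : 0 ≤ β)
    (hlam : lam ≤ cosh x) (h : L₀ * cosh x - β / s * sinh x ≤ β * lam) : L₀ ≤ β / s + β := by
  have key : cosh x * L₀ ≤ cosh x * (β / s + β) := by
    nlinarith [sinh_le_cosh x, div_nonneg hβ hs]
  exact le_of_mul_le_mul_left key (cosh_pos x)

end

theorem exterior_mass_core (T : ℝ) (hT : 0 < T) :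
    ∃ lam₀ : ℝ, 1 ≤ lam₀ ∧
      ∀ lam : ℝ, lam₀ ≤ lam → ∀ h : ℝ, 0 < h → ∀ B : ℝ, 0 ≤ B →
        ∀ L : ℝ → ℝ, ContinuousOn L (Set.Icc 0 (lam * h)) →
          (∀ r ∈ Set.Icc (0 : ℝ) (lam * h), 0 ≤ L r ∧ L r ≤ B * h ^ 2) →
          (∀ r ∈ Set.Icc (0 : ℝ) (lam * h),
            L 0 - B * lam⁻¹ * h * r +
                T * (h ^ 2)⁻¹ * ∫ s in (0 : ℝ)..r, ∫ t in (0 : ℝ)..s, L t ≤ L r) →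
          L 0 ≤ (2 / Real.sqrt T + 1) * B * lam⁻¹ * h ^ 2 := by
  refine ⟨1 + 2 / T, by linarith [div_pos two_pos hT], ?_⟩
  intro lam hlam h hh B hB L hLc hLb hLint
  have hsqrt : 0 < √T := sqrt_pos.2 hT
  have hlam_pos : 0 < lam := by linarith [div_pos two_pos hT]
  have hcosh : lam ≤ cosh (√T * lam) :=
    le_cosh_sqrt_mul hT.le hlam_pos.le (by rw [← div_le_iff₀ hT]; linarith)
  have hω : (√T / h) ^ 2 = T * (h ^ 2)⁻¹ := by rw [div_pow, sq_sqrt hT.le, div_eq_mul_inv]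
  have hcomp := cosh_sub_sinh_le_of_integral_inequality (a := B * lam⁻¹ * h)
    (div_ne_zero hsqrt.ne' hh.ne') hLc (fun r hr => (hLb r hr).1) (by simpa only [hω] using hLint)
    (r := lam * h) ⟨by positivity, le_rfl⟩
  have hupper := (hLb _ ⟨by positivity, le_rfl⟩).2
  rw [show √T / h * (lam * h) = √T * lam by field_simp,
    show B * lam⁻¹ * h / (√T / h) = B * lam⁻¹ * h ^ 2 / √T by field_simp] at hcomp
  rw [show B * h ^ 2 = B * lam⁻¹ * h ^ 2 * lam by field_simp] at hupper
  have hβ : 0 ≤ B * lam⁻¹ * h ^ 2 := by positivity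
  have hL₀ := le_div_add_of_cosh_sub_sinh_le hsqrt.le hβ hcosh (hcomp.trans hupper)
  have hdiv : B * lam⁻¹ * h ^ 2 / √T ≤ 2 / √T * (B * lam⁻¹ * h ^ 2) := by
    rw [div_mul_eq_mul_div]; exact div_le_div_of_nonneg_right (by linarith) hsqrt.le
  linarith
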